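/- The operator π_R(b̂_2^+) = ∂_{y₂} + (w²/24)∂_{y₁} + (w/2)∂_z − (1/2)(∂_{x₂} + (w/2)∂_{x₁})², expressed in the coordinates ξ₁ = x₁ − (w/2)x₂, ξ₂ = x₂, η₁ = y₁ + (w²/12)y₂ − (w/4)z, η₂ = y₂, ζ = z − (w/2)y₂, ω = w, equals ∂_{η₂} − (1/2)∂_{ξ₂}². -/

import Mathlib

/-- smooth functions of six real variables -/
abbrev F6 := (Fin 6 → ℝ) → ℝ

/-- partial derivative in the i-th coordinate -/
noncomputable def pd (i : Fin 6) (f : F6) : F6 := fun x => fderiv ℝ f x (Pi.single i 1)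

/-- the change of variables (ξ₁,ξ₂,η₁,η₂,ζ,ω) ↦ (x₁,x₂,y₁,y₂,z,w):
    x₁ = ξ₁ + (ω/2)ξ₂, x₂ = ξ₂, y₁ = η₁ + ζω/4 + η₂ω²/24, y₂ = η₂,
    z = ζ + η₂ω/2, w = ω. Coordinate indices: 0,…,5. -/
noncomputable def phi (u : Fin 6 → ℝ) : Fin 6 → ℝ :=
  ![u 0 + u 5 / 2 * u 1,
    u 1,
    u 2 + u 4 * u 5 / 4 + u 3 * u 5 ^ 2 / 24,
    u 3,
    u 4 + u 3 * u 5 / 2,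
    u 5]

/-- the first-order operator ∂_{x₂} + (w/2)∂_{x₁} -/
noncomputable def S : F6 → F6 := fun f x => pd 1 f x + x 5 / 2 * pd 0 f x

/-- π_R(b̂₂⁺) in old coordinates:
    ∂_{y₂} + (w²/24)∂_{y₁} + (w/2)∂_z − (1/2)(∂_{x₂} + (w/2)∂_{x₁})² -/
noncomputable def B2hatOld : F6 → F6 := fun f x =>
  pd 3 f x + x 5 ^ 2 / 24 * pd 2 f x + x 5 / 2 * pd 4 f x - 1/2 * S (S f) x

/-- π_R(b̂₂⁺) in new coordinates: ∂_{η₂} − (1/2)∂_{ξ₂}² -/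
noncomputable def B2hatNew : F6 → F6 := fun g u => pd 3 g u - 1/2 * pd 1 (pd 1 g) u

open ContinuousLinearMap in
noncomputable def Lmap (u : Fin 6 → ℝ) : (Fin 6 → ℝ) →L[ℝ] (Fin 6 → ℝ) :=
  ContinuousLinearMap.pi
    ![proj 0 + ((u 1 / 2) • proj 5 + (u 5 / 2) • proj 1),
      proj 1,
      proj 2 + ((u 5 / 4) • proj 4 + (u 4 / 4) • proj 5)
        + ((u 5 ^ 2 / 24) • proj 3 + (u 3 * u 5 / 12) • proj 5),
      proj 3,
      proj 4 + ((u 5 / 2) • proj 3 + (u 3 / 2) • proj 5),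
      proj 5]

open ContinuousLinearMap in
lemma hasF_mul2 (i j : Fin 6) (u : Fin 6 → ℝ) :
    HasFDerivAt (fun v : Fin 6 → ℝ => v i * v j)
      ((u j : ℝ) • (proj i : (Fin 6 → ℝ) →L[ℝ] ℝ) + (u i : ℝ) • proj j) u := by
  have h := (hasFDerivAt_apply (𝕜 := ℝ) i u).mul (hasFDerivAt_apply (𝕜 := ℝ) j u)
  refine h.congr_fderiv ?_
  ext v
  simp
  ring

open ContinuousLinearMap in
lemma comp0 (u : Fin 6 → ℝ) :
    HasFDerivAt (fun v : Fin 6 → ℝ => v 0 + v 5 / 2 * v 1)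
      ((proj 0 : (Fin 6 → ℝ) →L[ℝ] ℝ) + ((u 1 / 2) • proj 5 + (u 5 / 2) • proj 1)) u := by
  have h0 : (fun v : Fin 6 → ℝ => v 0 + v 5 / 2 * v 1)
        = fun v : Fin 6 → ℝ => v 0 + (1/2 : ℝ) * (v 5 * v 1) := by funext v; ring
  rw [h0]
  have h := (hasFDerivAt_apply (𝕜 := ℝ) 0 u).add ((hasF_mul2 5 1 u).const_mul (1/2 : ℝ))
  refine h.congr_fderiv ?_
  ext v; simp; ring

open ContinuousLinearMap in
lemma comp2 (u : Fin 6 → ℝ) :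
    HasFDerivAt (fun v : Fin 6 → ℝ => v 2 + v 4 * v 5 / 4 + v 3 * v 5 ^ 2 / 24)
      ((proj 2 : (Fin 6 → ℝ) →L[ℝ] ℝ) + ((u 5 / 4) • proj 4 + (u 4 / 4) • proj 5)
        + ((u 5 ^ 2 / 24) • proj 3 + (u 3 * u 5 / 12) • proj 5)) u := by
  have h0 : (fun v : Fin 6 → ℝ => v 2 + v 4 * v 5 / 4 + v 3 * v 5 ^ 2 / 24)
        = fun v : Fin 6 → ℝ => v 2 + (1/4 : ℝ) * (v 4 * v 5)
            + (1/24 : ℝ) * (v 3 * (v 5 * v 5)) := by funext v; ring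
  rw [h0]
  have hm3 : HasFDerivAt (fun v : Fin 6 → ℝ => v 3 * (v 5 * v 5))
      (((u 5 * u 5 : ℝ) • (ContinuousLinearMap.proj 3 : (Fin 6 → ℝ) →L[ℝ] ℝ))
        + (2 * u 3 * u 5 : ℝ) • ContinuousLinearMap.proj 5) u := by
    have h := (hasFDerivAt_apply (𝕜 := ℝ) 3 u).mul (hasF_mul2 5 5 u)
    refine h.congr_fderiv ?_
    ext v; simp; ring
  have h := ((hasFDerivAt_apply (𝕜 := ℝ) 2 u).add
      ((hasF_mul2 4 5 u).const_mul (1/4 : ℝ))).add (hm3.const_mul (1/24 : ℝ))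
  refine h.congr_fderiv ?_
  ext v; simp; ring

open ContinuousLinearMap in
lemma comp4 (u : Fin 6 → ℝ) :
    HasFDerivAt (fun v : Fin 6 → ℝ => v 4 + v 3 * v 5 / 2)
      ((proj 4 : (Fin 6 → ℝ) →L[ℝ] ℝ) + ((u 5 / 2) • proj 3 + (u 3 / 2) • proj 5)) u := by
  have h0 : (fun v : Fin 6 → ℝ => v 4 + v 3 * v 5 / 2)
        = fun v : Fin 6 → ℝ => v 4 + (1/2 : ℝ) * (v 3 * v 5) := by funext v; ring
  rw [h0]
  have h := (hasFDerivAt_apply (𝕜 := ℝ) 4 u).add ((hasF_mul2 3 5 u).const_mul (1/2 : ℝ))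
  refine h.congr_fderiv ?_
  ext v; simp; ring

lemma hasFDerivAt_phi (u : Fin 6 → ℝ) : HasFDerivAt phi (Lmap u) u := by
  apply hasFDerivAt_pi''
  intro i
  fin_cases i
  · exact comp0 u
  · exact hasFDerivAt_apply 1 u
  · exact comp2 u
  · exact hasFDerivAt_apply 3 u
  · exact comp4 u
  · exact hasFDerivAt_apply 5 u

lemma pd_comp (g : F6) (u : Fin 6 → ℝ) (hg : DifferentiableAt ℝ g (phi u)) (i : Fin 6) :
    pd i (g ∘ phi) u = fderiv ℝ g (phi u) (Lmap u (Pi.single i 1)) := by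
  have h := (hg.hasFDerivAt.comp u (hasFDerivAt_phi u)).fderiv
  simp only [pd, h, ContinuousLinearMap.comp_apply]

lemma Lmap_single1 (u : Fin 6 → ℝ) :
    Lmap u (Pi.single (1 : Fin 6) 1)
      = (Pi.single (1 : Fin 6) (1:ℝ) : Fin 6 → ℝ)
        + (u 5 / 2) • (Pi.single (0 : Fin 6) (1:ℝ) : Fin 6 → ℝ) := by
  funext j
  fin_cases j <;> simp [Lmap, Matrix.cons_val_succ, Pi.single_apply]
  all_goals
    show (ContinuousLinearMap.proj (5 : Fin 6) : (Fin 6 → ℝ) →L[ℝ] ℝ) _ = 0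
    simp [Pi.single_apply]

lemma Lmap_single3 (u : Fin 6 → ℝ) :
    Lmap u (Pi.single (3 : Fin 6) 1)
      = (Pi.single (3 : Fin 6) (1:ℝ) : Fin 6 → ℝ)
        + (u 5 ^ 2 / 24) • (Pi.single (2 : Fin 6) (1:ℝ) : Fin 6 → ℝ)
        + (u 5 / 2) • (Pi.single (4 : Fin 6) (1:ℝ) : Fin 6 → ℝ) := by
  funext j
  fin_cases j <;> simp [Lmap, Matrix.cons_val_succ, Pi.single_apply]
  all_goals
    show (ContinuousLinearMap.proj (5 : Fin 6) : (Fin 6 → ℝ) →L[ℝ] ℝ) _ = 0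
    simp [Pi.single_apply]

lemma phi5 (u : Fin 6 → ℝ) : phi u 5 = u 5 := rfl

lemma pd1_comp (g : F6) (u : Fin 6 → ℝ) (hg : DifferentiableAt ℝ g (phi u)) :
    pd 1 (g ∘ phi) u = S g (phi u) := by
  rw [pd_comp g u hg 1, Lmap_single1]
  simp only [map_add, map_smul, S, pd, phi5, smul_eq_mul]

lemma pd3_comp (g : F6) (u : Fin 6 → ℝ) (hg : DifferentiableAt ℝ g (phi u)) :
    pd 3 (g ∘ phi) u
      = pd 3 g (phi u) + u 5 ^ 2 / 24 * pd 2 g (phi u) + u 5 / 2 * pd 4 g (phi u) := by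
  rw [pd_comp g u hg 3, Lmap_single3]
  simp only [map_add, map_smul, pd, smul_eq_mul]

lemma pd_contDiff (i : Fin 6) (f : F6) (hf : ContDiff ℝ (⊤ : ℕ∞) f) : ContDiff ℝ (⊤ : ℕ∞) (pd i f) :=
  (hf.fderiv_right (by simp)).clm_apply contDiff_const

lemma S_contDiff (f : F6) (hf : ContDiff ℝ (⊤ : ℕ∞) f) : ContDiff ℝ (⊤ : ℕ∞) (S f) := by
  refine (pd_contDiff 1 f hf).add (ContDiff.mul ?_ (pd_contDiff 0 f hf))
  exact ((ContinuousLinearMap.proj (R := ℝ) (φ := fun _ : Fin 6 => ℝ) 5).contDiff).div_const 2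

theorem stmt_6 (F : F6) (hF : ContDiff ℝ (⊤ : ℕ∞) F) (u : Fin 6 → ℝ) :
    B2hatOld F (phi u) = B2hatNew (F ∘ phi) u := by
  have hSF : ContDiff ℝ (⊤ : ℕ∞) (S F) := S_contDiff F hF
  have h1 : pd 1 (F ∘ phi) = (S F) ∘ phi := by
    funext v
    exact pd1_comp F v (hF.differentiable (by simp) _)
  have h2 : pd 1 (pd 1 (F ∘ phi)) u = S (S F) (phi u) := by
    rw [h1]
    exact pd1_comp (S F) u (hSF.differentiable (by simp) _)
  have h3 := pd3_comp F u (hF.differentiable (by simp) _)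
  simp only [B2hatOld, B2hatNew, h2, h3, phi5]
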